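/- arXiv:2311.00582 — 5 statements merged into one kernel-verified Lean document; each statement's English description precedes it below -/
import Mathlib

section
/- If (p,q) is the unique Nash equilibrium of a finite two-player zero-sum matrix game R with value v*, then for every pure strategy i outside the support of p, e_iᵀ R q < v*, and for every pure strategy j outside the support of q, pᵀ R e_j > v*. -/
open Finset

/-- A mixed strategy: nonnegative entries summing to 1. -/
def isSimplex {n : ℕ} (p : Fin n → ℝ) : Prop := (∀ i, 0 ≤ p i) ∧ ∑ i, p i = 1

/-- Expected payoff `pᵀ R q` to player 1. -/
noncomputable def pay {m n : ℕ} (R : Matrix (Fin m) (Fin n) ℝ) (p : Fin m → ℝ)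
    (q : Fin n → ℝ) : ℝ :=
  ∑ i, ∑ j, p i * R i j * q j

/-- Payoff of pure row `i` against mixed column strategy `q`:  `e_iᵀ R q`. -/
noncomputable def rowPay {m n : ℕ} (R : Matrix (Fin m) (Fin n) ℝ) (i : Fin m)
    (q : Fin n → ℝ) : ℝ :=
  ∑ j, R i j * q j

/-- Payoff of mixed row strategy `p` against pure column `j`:  `pᵀ R e_j`. -/
noncomputable def colPay {m n : ℕ} (R : Matrix (Fin m) (Fin n) ℝ) (p : Fin m → ℝ)
    (j : Fin n) : ℝ :=
  ∑ i, p i * R i j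

/-- Nash equilibrium of the zero-sum matrix game `R`. -/
def isNash {m n : ℕ} (R : Matrix (Fin m) (Fin n) ℝ) (p : Fin m → ℝ)
    (q : Fin n → ℝ) : Prop :=
  isSimplex p ∧ isSimplex q ∧
    (∀ p', isSimplex p' → pay R p' q ≤ pay R p q) ∧
    (∀ q', isSimplex q' → pay R p q ≤ pay R p q')

/-!
If `p i = 0`, Farkas' lemma for the game shifted by its value `v*` gives a dichotomy: either some
strategy guaranteeing `v*` puts positive weight on row `i`, or some strategy holding every row to
at most `v*` holds row `i` strictly below `v*`. Either strategy forms an equilibrium together with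
the other half of `(p, q)`, so uniqueness excludes the first case and turns the second strategy
into `q`. Columns are rows of the game `-Rᵀ`.

Farkas' lemma follows from separating a point from a finitely generated cone, which is closed
because, by Carathéodory's argument, it is a finite union of cones over linearly independent
families.
-/

open Matrix

section ConicHull

variable {ι E : Type*} [AddCommGroup E] [Module ℝ E]

def finsetConicHull (v : ι → E) (s : Finset ι) : Set E :=
  {x | ∃ c : ι → ℝ, (∀ k ∈ s, 0 ≤ c k) ∧ ∑ k ∈ s, c k • v k = x}

variable [DecidableEq ι]

lemma finsetConicHull_erase_subset (v : ι → E) (s : Finset ι) (j : ι) :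
    finsetConicHull v (s.erase j) ⊆ finsetConicHull v s := by
  rintro _ ⟨c, hc, rfl⟩
  refine ⟨Function.update c j 0, fun k hk => ?_, ?_⟩
  · rcases eq_or_ne k j with rfl | hkj
    · simp
    · simpa [hkj] using hc k (mem_erase.2 ⟨hkj, hk⟩)
  · rw [← sum_erase s (by simp : Function.update c j 0 j • v j = 0)]
    exact sum_congr rfl fun k hk => by rw [Function.update_of_ne (ne_of_mem_erase hk)]

lemma finsetConicHull_subset_iUnion_erase {v : ι → E} {s : Finset ι}
    (hv : ¬LinearIndepOn ℝ v s) :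
    finsetConicHull v s ⊆ ⋃ j ∈ s, finsetConicHull v (s.erase j) := by
  rintro _ ⟨c, hc, rfl⟩
  obtain ⟨g, hg, hpos⟩ : ∃ g : ι → ℝ, ∑ k ∈ s, g k • v k = 0 ∧ ∃ k ∈ s, 0 < g k := by
    obtain ⟨g, hg, k, hk, hgk⟩ := not_linearIndepOn_finset_iff.mp hv
    rcases hgk.lt_or_gt with hlt | hgt
    · exact ⟨-g, by simp [neg_smul, hg], k, hk, neg_pos.mpr hlt⟩
    · exact ⟨g, hg, k, hk, hgt⟩
  obtain ⟨j, hj, hjmin⟩ := (s.filter (0 < g ·)).exists_min_image (fun k => c k / g k)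
    (hpos.imp fun k hk => mem_filter.2 hk)
  obtain ⟨hjs, hgj⟩ := mem_filter.1 hj
  -- Subtracting the largest multiple of the relation `g` that keeps `c` nonnegative on `s`
  -- kills the coefficient of `v j`.
  set d := c - (c j / g j) • g with hd
  have hd_nonneg : ∀ k ∈ s, 0 ≤ d k := by
    intro k hk
    have hcoef : 0 ≤ c j / g j := div_nonneg (hc j hjs) hgj.le
    simp only [hd, Pi.sub_apply, Pi.smul_apply, smul_eq_mul, sub_nonneg]
    rcases le_or_gt (g k) 0 with hgk | hgk
    · exact (mul_nonpos_of_nonneg_of_nonpos hcoef hgk).trans (hc k hk)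
    · exact (le_div_iff₀ hgk).1 (hjmin k (mem_filter.2 ⟨hk, hgk⟩))
  have hdj : d j = 0 := by simp [hd, div_mul_cancel₀ _ hgj.ne']
  refine Set.mem_iUnion₂.2 ⟨j, hjs, d, fun k hk => hd_nonneg k (mem_of_mem_erase hk), ?_⟩
  rw [sum_erase s (by simp [hdj])]
  simp [hd, sub_smul, sum_sub_distrib, mul_smul, ← smul_sum, hg]

variable [TopologicalSpace E] [IsTopologicalAddGroup E] [ContinuousSMul ℝ E] [T2Space E]

lemma isClosed_finsetConicHull_of_linearIndepOn {v : ι → E} {s : Finset ι}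
    (hv : LinearIndepOn ℝ v s) : IsClosed (finsetConicHull v s) := by
  set L := Fintype.linearCombination ℝ (fun k : s => v k)
  have hL : Topology.IsClosedEmbedding L := LinearMap.isClosedEmbedding_of_injective
    (LinearMap.ker_eq_bot.2 (linearIndependent_iff_injective_fintypeLinearCombination.1 hv))
  have hcone : finsetConicHull v s = L '' Set.Ici 0 := by
    ext x
    constructor
    · rintro ⟨c, hc, rfl⟩
      refine ⟨fun k => c k, fun k => hc k k.2, ?_⟩
      simp [L, Fintype.linearCombination_apply, sum_attach s (fun k => c k • v k)]
    · rintro ⟨d, hd, rfl⟩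
      refine ⟨fun k => if h : k ∈ s then d ⟨k, h⟩ else 0,
        fun k hk => by simpa [hk] using hd ⟨k, hk⟩, ?_⟩
      simp [L, Fintype.linearCombination_apply, ← sum_attach s]
  rw [hcone]
  exact hL.isClosedMap _ isClosed_Ici

theorem isClosed_finsetConicHull (v : ι → E) (s : Finset ι) :
    IsClosed (finsetConicHull v s) := by
  induction s using Finset.strongInduction with
  | H s ih =>
    by_cases hv : LinearIndepOn ℝ v s
    · exact isClosed_finsetConicHull_of_linearIndepOn hv
    · rw [(finsetConicHull_subset_iUnion_erase hv).antisymm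
        (Set.iUnion₂_subset fun j _ => finsetConicHull_erase_subset v s j)]
      exact isClosed_biUnion_finset fun j hj => ih _ (erase_ssubset hj)

theorem mem_finsetConicHull_univ_or_exists_separating [LocallyConvexSpace ℝ E] [Fintype ι]
    (v : ι → E) (x : E) :
    x ∈ finsetConicHull v univ ∨ ∃ f : StrongDual ℝ E, (∀ k, 0 ≤ f (v k)) ∧ f x < 0 := by
  let C : PointedCone ℝ E :=
    (PointedCone.positive ℝ (ι → ℝ)).map (Fintype.linearCombination ℝ v)
  have hC : (C : Set E) = finsetConicHull v univ := by
    ext y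
    simp [C, finsetConicHull, Fintype.linearCombination_apply, Pi.le_def]
  by_cases hx : x ∈ C
  · exact .inl (hC ▸ hx)
  · have hCclosed : IsClosed (C : Set E) := hC ▸ isClosed_finsetConicHull v univ
    obtain ⟨f, hf, hfx⟩ := ProperCone.hyperplane_separation_point ⟨C, hCclosed⟩ hx
    refine .inr ⟨f, fun k => hf _ ?_, hfx⟩
    show v k ∈ (C : Set E)
    rw [hC]
    have hsingle : (0 : ι → ℝ) ≤ Pi.single k 1 := Pi.single_nonneg.2 zero_le_one
    exact ⟨Pi.single k 1, fun i _ => hsingle i, by simp [Pi.single_apply]⟩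

end ConicHull

theorem Matrix.exists_le_vecMul_or_exists_mulVec_nonpos {m n : Type*} [Fintype m] [Fintype n]
    (A : Matrix m n ℝ) (c : n → ℝ) :
    (∃ y, 0 ≤ y ∧ c ≤ y ᵥ* A) ∨ ∃ x, 0 ≤ x ∧ A *ᵥ x ≤ 0 ∧ 0 < c ⬝ᵥ x := by
  classical
  -- the generators `-eⱼ` absorb the slack in `c ≤ y ᵥ* A`
  rcases mem_finsetConicHull_univ_or_exists_separating
    (Sum.elim (fun k => A k) (fun j => -Pi.single j 1)) c with ⟨w, hw, hc⟩ | ⟨f, hf, hfc⟩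
  · refine .inl ⟨w ∘ Sum.inl, fun k => hw _ (mem_univ _), fun j => ?_⟩
    have hcj : c j = ∑ k, w (Sum.inl k) * A k j - w (Sum.inr j) := by
      rw [← hc]
      simp [Fintype.sum_sum_type, Pi.single_apply, sub_eq_add_neg]
    show c j ≤ ∑ k, w (Sum.inl k) * A k j
    linarith [hw (Sum.inr j) (mem_univ _)]
  · set x : n → ℝ := fun j => -f (Pi.single j 1)
    have hfx (z : n → ℝ) : f z = -(z ⬝ᵥ x) := by
      conv_lhs => rw [pi_eq_sum_univ' z]
      simp [x, dotProduct]
    refine .inr ⟨x, fun j => ?_, fun k => ?_, ?_⟩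
    · simpa [x] using hf (Sum.inr j)
    · have hk := hf (Sum.inl k)
      rw [Sum.elim_inl, hfx] at hk
      simpa [mulVec] using hk
    · linarith [hfx c]

section Game

variable {m n : ℕ}

lemma isSimplex_single (i : Fin n) : isSimplex (Pi.single i 1 : Fin n → ℝ) :=
  single_mem_stdSimplex ℝ i

lemma isSimplex_inv_sum_smul {x : Fin n → ℝ} (hx : 0 ≤ x) (hsum : 0 < ∑ i, x i) :
    isSimplex ((∑ i, x i)⁻¹ • x) :=
  ⟨fun i => mul_nonneg (inv_nonneg.2 hsum.le) (hx i), by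
    simp [← mul_sum, inv_mul_cancel₀ hsum.ne']⟩

theorem exists_le_colPay_pos_or_exists_rowPay_lt (R : Matrix (Fin m) (Fin n) ℝ) (v : ℝ)
    (i : Fin m) :
    (∃ p, isSimplex p ∧ (∀ j, v ≤ colPay R p j) ∧ 0 < p i) ∨
      ∃ q, isSimplex q ∧ (∀ k, rowPay R k q ≤ v) ∧ rowPay R i q < v := by
  set A : Matrix (Fin m) (Fin n) ℝ := R - of fun _ _ => v
  have hcol (w : Fin m → ℝ) (hw : 0 < ∑ k, w k) (j : Fin n) :
      colPay R ((∑ k, w k)⁻¹ • w) j - v = (∑ k, w k)⁻¹ * (w ᵥ* A) j := by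
    simp only [A, colPay, vecMul, dotProduct, Matrix.sub_apply, of_apply, Pi.smul_apply,
      smul_eq_mul, mul_sub, sum_sub_distrib, ← sum_mul, mul_sum]
    field_simp
  have hrow (x : Fin n → ℝ) (hx : 0 < ∑ j, x j) (k : Fin m) :
      rowPay R k ((∑ j, x j)⁻¹ • x) - v = (∑ j, x j)⁻¹ * (A *ᵥ x) k := by
    simp only [A, rowPay, mulVec, dotProduct, Matrix.sub_apply, of_apply, Pi.smul_apply,
      smul_eq_mul, sub_mul, sum_sub_distrib, mul_left_comm _ (∑ j, x j)⁻¹, ← mul_sum]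
    field_simp
  rcases A.exists_le_vecMul_or_exists_mulVec_nonpos (-A i) with ⟨y, hy, hyA⟩ | ⟨x, hx, hxA, hix⟩
  · -- `y + eᵢ` guarantees `0` in the shifted game `A` and puts positive weight on `i`
    set w := y + Pi.single i 1 with hw_def
    have hw : 0 ≤ w := add_nonneg hy (Pi.single_nonneg.2 zero_le_one)
    have hwi : 0 < w i := by simpa [hw_def] using add_pos_of_nonneg_of_pos (hy i) one_pos
    have hwA : 0 ≤ w ᵥ* A := by
      rw [hw_def, add_vecMul, single_one_vecMul]
      exact fun j => neg_le_iff_add_nonneg.1 (hyA j)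
    have hsum : 0 < ∑ k, w k := hwi.trans_le (single_le_sum (fun k _ => hw k) (mem_univ i))
    refine .inl ⟨_, isSimplex_inv_sum_smul hw hsum, fun j => ?_, mul_pos (inv_pos.2 hsum) hwi⟩
    linarith [hcol w hsum j, mul_nonneg (inv_nonneg.2 hsum.le) (hwA j)]
  · have hxi : (A *ᵥ x) i < 0 := by
      rw [neg_dotProduct] at hix
      exact neg_pos.1 hix
    have hsum : 0 < ∑ j, x j := by
      refine (sum_nonneg fun j _ => hx j).lt_of_ne fun h => ?_
      rw [eq_comm, Fintype.sum_eq_zero_iff_of_nonneg hx] at h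
      simp [h] at hxi
    refine .inr ⟨_, isSimplex_inv_sum_smul hx hsum, fun k => ?_, ?_⟩
    · linarith [hrow x hsum k, mul_nonpos_of_nonneg_of_nonpos (inv_nonneg.2 hsum.le) (hxA k)]
    · linarith [hrow x hsum i, mul_neg_of_pos_of_neg (inv_pos.2 hsum) hxi]

variable (R : Matrix (Fin m) (Fin n) ℝ)

lemma pay_eq_dotProduct_mulVec (p : Fin m → ℝ) (q : Fin n → ℝ) :
    pay R p q = p ⬝ᵥ (R *ᵥ q) := by
  simp [pay, dotProduct, mulVec, mul_sum, mul_assoc]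

lemma pay_single_left (i : Fin m) (q : Fin n → ℝ) : pay R (Pi.single i 1) q = rowPay R i q := by
  rw [pay_eq_dotProduct_mulVec, single_one_dotProduct]
  rfl

lemma pay_single_right (p : Fin m → ℝ) (j : Fin n) :
    pay R p (Pi.single j 1) = colPay R p j := by
  rw [pay_eq_dotProduct_mulVec, dotProduct_mulVec, dotProduct_single_one]
  rfl

lemma pay_neg_transpose (p : Fin m → ℝ) (q : Fin n → ℝ) : pay (-Rᵀ) q p = -pay R p q := by
  simp only [pay, Matrix.neg_apply, transpose_apply, mul_neg, neg_mul, sum_neg_distrib]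
  rw [sum_comm]
  congr! 3 with i _ j _
  ring

lemma rowPay_neg_transpose (p : Fin m → ℝ) (j : Fin n) :
    rowPay (-Rᵀ) j p = -colPay R p j := by
  simp [rowPay, colPay, mul_comm]

variable {R} {p : Fin m → ℝ} {q : Fin n → ℝ}

lemma pay_le_of_forall_rowPay_le {v : ℝ} (hp : isSimplex p) (h : ∀ k, rowPay R k q ≤ v) :
    pay R p q ≤ v := by
  rw [pay_eq_dotProduct_mulVec]
  calc p ⬝ᵥ (R *ᵥ q) ≤ ∑ k, p k * v :=
        sum_le_sum fun k _ => mul_le_mul_of_nonneg_left (h k) (hp.1 k)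
    _ = v := by rw [← sum_mul, hp.2, one_mul]

lemma le_pay_of_forall_le_colPay {v : ℝ} (hq : isSimplex q) (h : ∀ j, v ≤ colPay R p j) :
    v ≤ pay R p q := by
  rw [pay_eq_dotProduct_mulVec, dotProduct_mulVec]
  calc v = ∑ j, v * q j := by rw [← mul_sum, hq.2, mul_one]
    _ ≤ (p ᵥ* R) ⬝ᵥ q := sum_le_sum fun j _ => mul_le_mul_of_nonneg_right (h j) (hq.1 j)

lemma isNash_of_le_colPay_of_rowPay_le {v : ℝ} (hp : isSimplex p) (hq : isSimplex q)
    (hcol : ∀ j, v ≤ colPay R p j) (hrow : ∀ k, rowPay R k q ≤ v) : isNash R p q := by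
  have hv : pay R p q = v :=
    (pay_le_of_forall_rowPay_le hp hrow).antisymm (le_pay_of_forall_le_colPay hq hcol)
  exact ⟨hp, hq, fun p' hp' => hv ▸ pay_le_of_forall_rowPay_le hp' hrow,
    fun q' hq' => hv ▸ le_pay_of_forall_le_colPay hq' hcol⟩

lemma isNash.rowPay_le (h : isNash R p q) (k : Fin m) : rowPay R k q ≤ pay R p q :=
  pay_single_left R k q ▸ h.2.2.1 _ (isSimplex_single k)

lemma isNash.le_colPay (h : isNash R p q) (j : Fin n) : pay R p q ≤ colPay R p j :=
  pay_single_right R p j ▸ h.2.2.2 _ (isSimplex_single j)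

lemma isNash.neg_transpose (h : isNash R p q) : isNash (-Rᵀ) q p := by
  refine ⟨h.2.1, h.1, fun q' hq' => ?_, fun p' hp' => ?_⟩
  · simpa only [pay_neg_transpose, neg_le_neg_iff] using h.2.2.2 q' hq'
  · simpa only [pay_neg_transpose, neg_le_neg_iff] using h.2.2.1 p' hp'

lemma isNash_neg_transpose_iff : isNash (-Rᵀ) q p ↔ isNash R p q :=
  ⟨fun h => by simpa using h.neg_transpose, isNash.neg_transpose⟩

theorem isNash.rowPay_lt_of_eq_zero (hNE : isNash R p q)
    (huniq : ∀ p' q', isNash R p' q' → p' = p ∧ q' = q) {i : Fin m} (hi : p i = 0) :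
    rowPay R i q < pay R p q := by
  rcases exists_le_colPay_pos_or_exists_rowPay_lt R (pay R p q) i with
    ⟨p', hp', hcol, hpos⟩ | ⟨q', hq', hrow, hlt⟩
  · obtain rfl := (huniq p' q (isNash_of_le_colPay_of_rowPay_le hp' hNE.2.1 hcol hNE.rowPay_le)).1
    exact absurd hi hpos.ne'
  · obtain rfl := (huniq p q' (isNash_of_le_colPay_of_rowPay_le hNE.1 hq' hNE.le_colPay hrow)).2
    exact hlt

end Game

/-- If `(p,q)` is the unique Nash equilibrium of `R` with value `v* = pay R p q`, then
every pure row outside `supp p` does strictly worse than `v*` against `q`, and every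
pure column outside `supp q` does strictly worse (for the minimizer) than `v*` against `p`. -/
theorem stmt1 {m n : ℕ} (R : Matrix (Fin m) (Fin n) ℝ)
    (p : Fin m → ℝ) (q : Fin n → ℝ)
    (hNE : isNash R p q)
    (huniq : ∀ p' q', isNash R p' q' → p' = p ∧ q' = q) :
    (∀ i, p i = 0 → rowPay R i q < pay R p q) ∧
      (∀ j, q j = 0 → pay R p q < colPay R p j) := by
  refine ⟨fun i => hNE.rowPay_lt_of_eq_zero huniq, fun j hj => ?_⟩
  have huniq' : ∀ q' p', isNash (-Rᵀ) q' p' → q' = q ∧ p' = p :=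
    fun q' p' h => (huniq p' q' (isNash_neg_transpose_iff.1 h)).symm
  simpa [rowPay_neg_transpose, pay_neg_transpose] using
    hNE.neg_transpose.rowPay_lt_of_eq_zero huniq' hj
end

section
/- Let R ∈ ℝ^{m×n} have a Nash equilibrium (p,q) with value v* satisfying SIISOW, and suppose the homogeneous system R_{IJ} δ = x·1, 1ᵀδ = 0 (with δ ∈ ℝ^{|J|}, x ∈ ℝ) has a nonzero solution. Then any such solution has x = 0 and δ ≠ 0 with R_{IJ} δ = 0. -/
/-!
Pair the system with the equilibrium strategy `p`, which lives on `I` and satisfies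
`pᵀ R_{IJ} = v* · 1`: then `x = pᵀ R_{IJ} δ = v* · 1ᵀδ = 0`,
and `δ ≠ 0` because `(δ, x) ≠ 0`.
-/

open Finset

theorem Fintype.sum_subtype_of_eq_zero {ι M : Type*} [Fintype ι] [AddCommMonoid M]
    (P : ι → Prop) [DecidablePred P] (f : ι → M) (hf : ∀ i, ¬P i → f i = 0) :
    ∑ i : {i // P i}, f i = ∑ i, f i := by
  rw [← Fintype.sum_subtype_add_sum_subtype P f,
    Fintype.sum_eq_zero (fun i : {i // ¬P i} => f i) fun i => hf i i.2, add_zero]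

theorem sum_pos_support_mul {ι : Type*} [Fintype ι] {p : ι → ℝ} (hp : ∀ i, 0 ≤ p i)
    (g : ι → ℝ) : ∑ i : {i // 0 < p i}, p i * g i = ∑ i, p i * g i :=
  Fintype.sum_subtype_of_eq_zero _ (fun i => p i * g i) fun i hi => by
    rw [← (hp i).eq_of_not_lt hi, zero_mul]

theorem eq_zero_of_mulVec_const_of_vecMul_const {I J α : Type*} [Fintype I] [Fintype J]
    [CommSemiring α]
    (A : Matrix I J α) {w : I → α} {δ : J → α} {v x : α} (hw : ∑ i, w i = 1)
    (hwA : ∀ j, ∑ i, w i * A i j = v) (hAδ : ∀ i, ∑ j, A i j * δ j = x)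
    (hδ : ∑ j, δ j = 0) : x = 0 :=
  calc x = ∑ i, w i * x := by rw [← sum_mul, hw, one_mul]
    _ = ∑ i, w i * ∑ j, A i j * δ j := by simp_rw [hAδ]
    _ = ∑ j, (∑ i, w i * A i j) * δ j := by
        simp_rw [mul_sum, sum_mul, mul_assoc]
        exact sum_comm
    _ = 0 := by simp_rw [hwA, ← mul_sum, hδ, mul_zero]

theorem stmt4_general {m n : ℕ} (R : Matrix (Fin m) (Fin n) ℝ)
    (p : Fin m → ℝ) (q : Fin n → ℝ) (v : ℝ)
    (hNE : isNash R p q)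
    (hcolIn : ∀ j, 0 < q j → colPay R p j = v)
    (δ : {j : Fin n // 0 < q j} → ℝ) (x : ℝ)
    (hnz : ¬(δ = 0 ∧ x = 0))
    (hsys : ∀ i : {i : Fin m // 0 < p i}, ∑ j : {j : Fin n // 0 < q j}, R i.1 j.1 * δ j = x)
    (hsum : ∑ j : {j : Fin n // 0 < q j}, δ j = 0) :
    x = 0 ∧ δ ≠ 0 ∧
      ∀ i : {i : Fin m // 0 < p i}, ∑ j : {j : Fin n // 0 < q j}, R i.1 j.1 * δ j = 0 := by
  obtain ⟨⟨hp0, hp1⟩, -⟩ := hNE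
  have hw : ∑ i : {i // 0 < p i}, p i = 1 := by
    simpa [hp1] using sum_pos_support_mul hp0 1
  have hwA (j : {j // 0 < q j}) : ∑ i : {i // 0 < p i}, p i * R i j = v :=
    (sum_pos_support_mul hp0 (R · j)).trans (hcolIn j j.2)
  have hx : x = 0 :=
    eq_zero_of_mulVec_const_of_vecMul_const (fun i j => R i.1 j.1) hw hwA hsys hsum
  exact ⟨hx, fun hδ => hnz ⟨hδ, hx⟩, fun i => (hsys i).trans hx⟩

/-- For a SIISOW Nash equilibrium `(p,q)` of `R`, any nonzero solution `(δ, x)` of the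
homogeneous system `R_IJ δ = x·1, 1ᵀδ = 0` has `x = 0` and `δ ≠ 0` with `R_IJ δ = 0`. -/
theorem stmt4 {m n : ℕ} (R : Matrix (Fin m) (Fin n) ℝ)
    (p : Fin m → ℝ) (q : Fin n → ℝ) (v : ℝ)
    (hNE : isNash R p q) (hv : v = pay R p q)
    (hrowIn : ∀ i, 0 < p i → rowPay R i q = v)
    (hcolIn : ∀ j, 0 < q j → colPay R p j = v)
    (hrowOut : ∀ i, p i = 0 → rowPay R i q < v)
    (hcolOut : ∀ j, q j = 0 → v < colPay R p j)
    (δ : {j : Fin n // 0 < q j} → ℝ) (x : ℝ)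
    (hnz : ¬(δ = 0 ∧ x = 0))
    (hsys : ∀ i : {i : Fin m // 0 < p i}, ∑ j : {j : Fin n // 0 < q j}, R i.1 j.1 * δ j = x)
    (hsum : ∑ j : {j : Fin n // 0 < q j}, δ j = 0) :
    x = 0 ∧ δ ≠ 0 ∧
      ∀ i : {i : Fin m // 0 < p i}, ∑ j : {j : Fin n // 0 < q j}, R i.1 j.1 * δ j = 0 :=
  stmt4_general R p q v hNE hcolIn δ x hnz hsys hsum
end

section
/- Let (p,q) be strategies with equal support I = J = {0,...,k−1}, k ≥ 2, all supported entries positive. Define the Extended Rock-Paper-Scissors matrix R^{eRPS} of size |A₁|×|A₂| by: R_{ij} = −c/(p_i q_j) if i,j < k and j ≡ i+1 (mod k); R_{ij} = c/(p_i q_j) if i,j < k and j ≡ i+2 (mod k); R_{ij} = 1 if i < k ≤ j; R_{ij} = −1 if j < k ≤ i; R_{ij} = 0 otherwise, where c = min_{i<k} min(p_i q_{(i+1) mod k}, p_i q_{(i+2) mod k}). Then e_iᵀ R^{eRPS} q = 0 for all i ∈ I and e_iᵀ R^{eRPS} q = −1 for all i ∉ I. -/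
open Finset

/-- Extension of `p : Fin m → ℝ` to `ℕ` by zero. -/
noncomputable def pext {m : ℕ} (p : Fin m → ℝ) (i : ℕ) : ℝ :=
  if h : i < m then p ⟨i, h⟩ else 0

/-- The normalizing constant `c` of the extended Rock-Paper-Scissors game. -/
noncomputable def eRPSc {m n : ℕ} (k : ℕ) (p : Fin m → ℝ) (q : Fin n → ℝ) : ℝ :=
  ⨅ i : Fin k, min (pext p i * pext q (((i : ℕ) + 1) % k))
    (pext p i * pext q (((i : ℕ) + 2) % k))

/-- The extended Rock-Paper-Scissors payoff matrix for target `(p, q)` with common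
support `{0, …, k-1}`. -/
noncomputable def eRPS {m n : ℕ} (k : ℕ) (p : Fin m → ℝ) (q : Fin n → ℝ) :
    Matrix (Fin m) (Fin n) ℝ :=
  Matrix.of fun i j =>
    if (i : ℕ) < k ∧ (j : ℕ) < k then
      if 1 < k ∧ (j : ℕ) = ((i : ℕ) + 1) % k then -(eRPSc k p q) / (p i * q j)
      else if 1 < k ∧ (j : ℕ) = ((i : ℕ) + 2) % k then eRPSc k p q / (p i * q j)
      else 0
    else if (i : ℕ) < k then 1
    else if (j : ℕ) < k then -1
    else 0

/-! In row `i < k` the weights `q_j` cancel the factors `1 / q_j`, leaving `-c / p_i` from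
column `i + 1` and `c / p_i` from column `i + 2`; a row `i ≥ k` earns `-q_j` in every column,
`-1` in total. When fewer than `k` columns exist, one of the products defining `c` vanishes,
so `c = 0`. -/

variable {m n : ℕ}

theorem pext_nonneg {p : Fin m → ℝ} (hp : ∀ i, 0 ≤ p i) (i : ℕ) : 0 ≤ pext p i := by
  unfold pext
  split_ifs
  exacts [hp _, le_rfl]

theorem eRPSc_nonneg (k : ℕ) {p : Fin m → ℝ} {q : Fin n → ℝ} (hp : ∀ i, 0 ≤ p i)
    (hq : ∀ j, 0 ≤ q j) : 0 ≤ eRPSc k p q :=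
  Real.iInf_nonneg fun _ =>
    le_min (mul_nonneg (pext_nonneg hp _) (pext_nonneg hq _))
      (mul_nonneg (pext_nonneg hp _) (pext_nonneg hq _))

theorem eRPSc_le (k : ℕ) (p : Fin m → ℝ) (q : Fin n → ℝ) (i : Fin k) :
    eRPSc k p q ≤ pext p i * pext q (((i : ℕ) + 1) % k) :=
  (ciInf_le (Finite.bddBelow_range _) i).trans (min_le_left _ _)

theorem eRPSc_eq_zero_of_lt {k : ℕ} {p : Fin m → ℝ} {q : Fin n → ℝ} (hp : ∀ i, 0 ≤ p i)
    (hq : ∀ j, 0 ≤ q j) (hnk : n < k) : eRPSc k p q = 0 := by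
  have hk : 0 < k := by omega
  have hsucc : ((n + (k - 1)) % k + 1) % k = n := by
    rw [Nat.mod_add_mod, show n + (k - 1) + 1 = n + k by omega, Nat.add_mod_right,
      Nat.mod_eq_of_lt hnk]
  refine le_antisymm ((eRPSc_le k p q ⟨(n + (k - 1)) % k, Nat.mod_lt _ hk⟩).trans_eq ?_)
    (eRPSc_nonneg k hp hq)
  simp [hsucc, pext]

theorem Nat.add_one_mod_ne_add_two_mod {k : ℕ} (hk : 2 ≤ k) (i : ℕ) :
    (i + 1) % k ≠ (i + 2) % k := fun h => by
  have h1 : 1 ≡ 2 [MOD k] := Nat.ModEq.add_left_cancel' i h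
  rw [Nat.modEq_iff_dvd' (by norm_num), Nat.dvd_one] at h1
  omega

theorem Fin.sum_univ_ite_val_eq {M : Type*} [AddCommMonoid M] (a : ℕ) (x : M) :
    ∑ j : Fin n, (if (j : ℕ) = a then x else 0) = if a < n then x else 0 := by
  split_ifs with ha
  · simpa [Fin.ext_iff] using Finset.sum_ite_eq' univ (⟨a, ha⟩ : Fin n) fun _ => x
  · exact Finset.sum_eq_zero fun j _ => if_neg fun (h : (j : ℕ) = a) => ha (h ▸ j.isLt)

section rowPay

variable {k : ℕ} {p : Fin m → ℝ} {q : Fin n → ℝ}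

theorem eRPS_mul_of_lt (hk : 2 ≤ k) {i : Fin m} (hi : (i : ℕ) < k) {j : Fin n}
    (hqj : q j = 0 ↔ k ≤ (j : ℕ)) :
    eRPS k p q i j * q j =
      (if (j : ℕ) = ((i : ℕ) + 1) % k then -eRPSc k p q / p i else 0) +
        (if (j : ℕ) = ((i : ℕ) + 2) % k then eRPSc k p q / p i else 0) := by
  have hmod : ∀ a, a % k < k := fun a => Nat.mod_lt a (by omega)
  by_cases hj : (j : ℕ) < k
  · have hq : q j ≠ 0 := fun h => absurd (hqj.1 h) (not_le.2 hj)
    have hne := Nat.add_one_mod_ne_add_two_mod hk i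
    simp only [eRPS, Matrix.of_apply, if_pos (And.intro hi hj), show 1 < k by omega, true_and]
    split_ifs with h1 h2
    · exact absurd (h1.symm.trans h2) hne
    all_goals simp [div_mul_eq_mul_div, mul_div_mul_right _ _ hq, neg_div]
  · have hne : ∀ a, (j : ℕ) ≠ a % k := fun a h => hj (h ▸ hmod a)
    simp [hqj.2 (not_lt.1 hj), hne]

theorem rowPay_eRPS_of_lt (hk : 2 ≤ k) {i : Fin m} (hi : (i : ℕ) < k)
    (hq : ∀ j : Fin n, q j = 0 ↔ k ≤ (j : ℕ)) :
    rowPay (eRPS k p q) i q =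
      (if ((i : ℕ) + 1) % k < n then -eRPSc k p q / p i else 0) +
        (if ((i : ℕ) + 2) % k < n then eRPSc k p q / p i else 0) := by
  simp only [rowPay, eRPS_mul_of_lt hk hi (hq _), Finset.sum_add_distrib,
    Fin.sum_univ_ite_val_eq]

theorem eRPS_mul_of_le {i : Fin m} (hi : k ≤ (i : ℕ)) {j : Fin n}
    (hqj : q j = 0 ↔ k ≤ (j : ℕ)) : eRPS k p q i j * q j = -q j := by
  by_cases hj : (j : ℕ) < k
  · simp [eRPS, hj, not_lt.2 hi]
  · simp [hqj.2 (not_lt.1 hj)]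

theorem rowPay_eRPS_of_le (hq : ∑ j, q j = 1) (hsupp : ∀ j : Fin n, q j = 0 ↔ k ≤ (j : ℕ))
    {i : Fin m} (hi : k ≤ (i : ℕ)) : rowPay (eRPS k p q) i q = -1 := by
  simp only [rowPay, eRPS_mul_of_le hi (hsupp _), Finset.sum_neg_distrib, hq]

end rowPay

theorem stmt6_general {m n : ℕ} (k : ℕ) (hk : 2 ≤ k)
    (p : Fin m → ℝ) (q : Fin n → ℝ)
    (hp : isSimplex p) (hq : isSimplex q)
    (hsuppQ : ∀ j : Fin n, 0 < q j ↔ (j : ℕ) < k) :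
    (∀ i : Fin m, (i : ℕ) < k → rowPay (eRPS k p q) i q = 0) ∧
      (∀ i : Fin m, k ≤ (i : ℕ) → rowPay (eRPS k p q) i q = -1) := by
  have hsupp : ∀ j : Fin n, q j = 0 ↔ k ≤ (j : ℕ) := fun j => by
    rw [← not_lt, ← hsuppQ, not_lt]
    exact ⟨le_of_eq, fun h => le_antisymm h (hq.1 j)⟩
  refine ⟨fun i hi => ?_, fun i hi => rowPay_eRPS_of_le hq.2 hsupp hi⟩
  rw [rowPay_eRPS_of_lt hk hi hsupp]
  by_cases hkn : k ≤ n
  · have hmod : ∀ a, a % k < n := fun a => (Nat.mod_lt a (by omega)).trans_le hkn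
    simp [hmod, neg_div]
  · simp [eRPSc_eq_zero_of_lt hp.1 hq.1 (not_le.1 hkn)]

/-- Row payoffs of the eRPS game: in-support pure rows obtain `0` against `q`,
out-of-support pure rows obtain `-1`. -/
theorem stmt6 {m n : ℕ} (k : ℕ) (hk : 2 ≤ k)
    (p : Fin m → ℝ) (q : Fin n → ℝ)
    (hp : isSimplex p) (hq : isSimplex q)
    (hsuppP : ∀ i : Fin m, 0 < p i ↔ (i : ℕ) < k)
    (hsuppQ : ∀ j : Fin n, 0 < q j ↔ (j : ℕ) < k) :
    (∀ i : Fin m, (i : ℕ) < k → rowPay (eRPS k p q) i q = 0) ∧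
      (∀ i : Fin m, k ≤ (i : ℕ) → rowPay (eRPS k p q) i q = -1) :=
  stmt6_general k hk p q hp hq hsuppQ
end

section
/- Let R ∈ ℝ^{m×n} be a zero-sum game with unique Nash equilibrium (p,q) of value v* where |supp(q)| ≥ 2, satisfying SIISOW. If there exists δ ∈ ℝ^{|J|}, δ ≠ 0, with 1ᵀδ = 0 and R_{IJ}δ = 0, then there exists a strategy r ≠ q such that (p,r) is also a Nash equilibrium — a contradiction. Hence no such δ exists. -/
/-!
Extend `δ` by zero to `d`. For small `c > 0`, `r = q + c • d` is still a mixed strategy, since `d`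
sums to zero and vanishes off `supp q`. Against `r` the rows in `supp p` still earn exactly `v`
because `R_IJ δ = 0`, while the rows outside `supp p` keep the strict inequality of SIISOW by
continuity; every column earns at least `v` against `p`. Hence `(p, r)` is a second equilibrium.
-/

open Finset

open Filter Topology

section Payoffs

variable {m n : ℕ} (R : Matrix (Fin m) (Fin n) ℝ)

theorem pay_eq_sum_mul_rowPay (p : Fin m → ℝ) (q : Fin n → ℝ) :
    pay R p q = ∑ i, p i * rowPay R i q := by
  simp only [pay, rowPay, mul_sum, mul_assoc]

theorem pay_eq_sum_colPay_mul (p : Fin m → ℝ) (q : Fin n → ℝ) :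
    pay R p q = ∑ j, colPay R p j * q j := by
  rw [pay, sum_comm]
  simp only [colPay, sum_mul]

theorem rowPay_add_smul (i : Fin m) (q d : Fin n → ℝ) (c : ℝ) :
    rowPay R i (q + c • d) = rowPay R i q + c * rowPay R i d := by
  simp only [rowPay, Pi.add_apply, Pi.smul_apply, smul_eq_mul, mul_add, sum_add_distrib, mul_sum]
  congr 1
  exact sum_congr rfl fun j _ => by ring

theorem pay_le_of_rowPay_le {p : Fin m → ℝ} {q : Fin n → ℝ} {v : ℝ} (hp : isSimplex p)
    (hrow : ∀ i, rowPay R i q ≤ v) : pay R p q ≤ v :=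
  calc pay R p q = ∑ i, p i * rowPay R i q := pay_eq_sum_mul_rowPay R p q
    _ ≤ ∑ i, p i * v := sum_le_sum fun i _ => mul_le_mul_of_nonneg_left (hrow i) (hp.1 i)
    _ = v := by rw [← sum_mul, hp.2, one_mul]

theorem le_pay_of_le_colPay {p : Fin m → ℝ} {q : Fin n → ℝ} {v : ℝ} (hq : isSimplex q)
    (hcol : ∀ j, v ≤ colPay R p j) : v ≤ pay R p q :=
  calc v = ∑ j, v * q j := by rw [← mul_sum, hq.2, mul_one]
    _ ≤ ∑ j, colPay R p j * q j :=
      sum_le_sum fun j _ => mul_le_mul_of_nonneg_right (hcol j) (hq.1 j)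
    _ = pay R p q := (pay_eq_sum_colPay_mul R p q).symm

theorem isNash_of_rowPay_le_of_le_colPay {p : Fin m → ℝ} {q : Fin n → ℝ} {v : ℝ}
    (hp : isSimplex p) (hq : isSimplex q) (hrow : ∀ i, rowPay R i q ≤ v)
    (hcol : ∀ j, v ≤ colPay R p j) : isNash R p q := by
  have hpay : pay R p q = v :=
    le_antisymm (pay_le_of_rowPay_le R hp hrow) (le_pay_of_le_colPay R hq hcol)
  refine ⟨hp, hq, fun p' hp' => ?_, fun q' hq' => ?_⟩
  · exact hpay ▸ pay_le_of_rowPay_le R hp' hrow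
  · exact hpay ▸ le_pay_of_le_colPay R hq' hcol

end Payoffs

theorem isSimplex_add_smul_of_sum_eq_zero {n : ℕ} {q d : Fin n → ℝ} (hq : isSimplex q)
    (hd : ∑ j, d j = 0) {c : ℝ} (hnonneg : ∀ j, 0 ≤ q j + c * d j) : isSimplex (q + c • d) := by
  refine ⟨hnonneg, ?_⟩
  simp only [Pi.add_apply, Pi.smul_apply, smul_eq_mul, sum_add_distrib, ← mul_sum, hq.2, hd,
    mul_zero, add_zero]

theorem eventually_nonneg_add_mul {n : ℕ} {q d : Fin n → ℝ} (hq : ∀ j, 0 ≤ q j)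
    (hd : ∀ j, q j = 0 → d j = 0) : ∀ᶠ c in 𝓝 (0 : ℝ), ∀ j, 0 ≤ q j + c * d j := by
  refine eventually_all.2 fun j => ?_
  rcases (hq j).eq_or_lt with hj | hj
  · exact Eventually.of_forall fun c => by simp [← hj, hd j hj.symm]
  · have hcont : Tendsto (fun c : ℝ => q j + c * d j) (𝓝 0) (𝓝 (q j)) :=
      (continuous_const.add (continuous_id.mul continuous_const)).tendsto' 0 _ (by simp)
    exact (hcont.eventually_const_lt hj).mono fun c hc => hc.le

theorem sum_mul_extend_subtype_val {ι α : Type*} [Fintype ι] [NonUnitalNonAssocSemiring α]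
    {P : ι → Prop} [DecidablePred P] (g : ι → α) (δ : Subtype P → α) :
    ∑ j, g j * Subtype.val.extend δ 0 j = ∑ j : Subtype P, g j * δ j := by
  rw [← Fintype.sum_subtype_add_sum_subtype P]
  have hout : ∀ j : {j // ¬P j}, Subtype.val.extend δ 0 j.1 = 0 := fun j =>
    Function.extend_apply' _ _ _ fun ⟨k, hk⟩ => j.2 (hk ▸ k.2)
  simp [hout]

theorem exists_ne_isNash_of_rowPay_eq_zero {m n : ℕ} {R : Matrix (Fin m) (Fin n) ℝ}
    {p : Fin m → ℝ} {q d : Fin n → ℝ} {v : ℝ} (hp : isSimplex p) (hq : isSimplex q)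
    (hrowIn : ∀ i, 0 < p i → rowPay R i q = v) (hrowOut : ∀ i, p i = 0 → rowPay R i q < v)
    (hcol : ∀ j, v ≤ colPay R p j) (hd : d ≠ 0) (hdsum : ∑ j, d j = 0)
    (hdsupp : ∀ j, q j = 0 → d j = 0) (hdker : ∀ i, 0 < p i → rowPay R i d = 0) :
    ∃ r, r ≠ q ∧ isNash R p r := by
  have hrow : ∀ᶠ c in 𝓝 (0 : ℝ), ∀ i, rowPay R i (q + c • d) ≤ v := by
    refine eventually_all.2 fun i => ?_
    simp only [rowPay_add_smul]
    rcases (hp.1 i).eq_or_lt with hi | hi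
    · have hcont : Tendsto (fun c : ℝ => rowPay R i q + c * rowPay R i d) (𝓝 0)
          (𝓝 (rowPay R i q)) :=
        (continuous_const.add (continuous_id.mul continuous_const)).tendsto' 0 _ (by simp)
      exact (hcont.eventually_lt_const (hrowOut i hi.symm)).mono fun c hc => hc.le
    · exact Eventually.of_forall fun c => by simp [hrowIn i hi, hdker i hi]
  obtain ⟨c, ⟨hnonneg, hrowc⟩, hc⟩ :=
    ((((eventually_nonneg_add_mul hq.1 hdsupp).and hrow).filter_mono nhdsWithin_le_nhds).and
      (self_mem_nhdsWithin : Set.Ioi (0 : ℝ) ∈ 𝓝[>] 0)).exists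
  refine ⟨q + c • d, fun h => hd ?_, isNash_of_rowPay_le_of_le_colPay R hp
    (isSimplex_add_smul_of_sum_eq_zero hq hdsum hnonneg) hrowc hcol⟩
  simpa [hc.ne'] using h

theorem stmt10_general {m n : ℕ} (R : Matrix (Fin m) (Fin n) ℝ)
    (p : Fin m → ℝ) (q : Fin n → ℝ) (v : ℝ)
    (hNE : isNash R p q)
    (huniq : ∀ p' q', isNash R p' q' → p' = p ∧ q' = q)
    (hrowIn : ∀ i, 0 < p i → rowPay R i q = v)
    (hcolIn : ∀ j, 0 < q j → colPay R p j = v)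
    (hrowOut : ∀ i, p i = 0 → rowPay R i q < v)
    (hcolOut : ∀ j, q j = 0 → v < colPay R p j) :
    ¬ ∃ δ : {j : Fin n // 0 < q j} → ℝ, δ ≠ 0 ∧
        (∑ j : {j : Fin n // 0 < q j}, δ j = 0) ∧
        ∀ i : {i : Fin m // 0 < p i}, ∑ j : {j : Fin n // 0 < q j}, R i.1 j.1 * δ j = 0 := by
  rintro ⟨δ, hδ, hδsum, hδker⟩
  obtain ⟨hp, hq, -⟩ := hNE
  set d : Fin n → ℝ := Subtype.val.extend δ 0
  have hd : d ≠ 0 := fun h =>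
    hδ (funext fun j => by rw [← Subtype.val_injective.extend_apply δ 0 j]; exact congrFun h j)
  have hdsupp : ∀ j, q j = 0 → d j = 0 := fun j hj =>
    Function.extend_apply' _ _ _ fun ⟨k, hk⟩ => (hk ▸ k.2).ne' hj
  have hdsum : ∑ j, d j = 0 := by simpa [hδsum] using sum_mul_extend_subtype_val 1 δ
  have hdker (i) (hi : 0 < p i) : rowPay R i d = 0 :=
    (sum_mul_extend_subtype_val (R i) δ).trans (hδker ⟨i, hi⟩)
  have hcol (j) : v ≤ colPay R p j :=
    (hq.1 j).eq_or_lt.elim (fun h => (hcolOut j h.symm).le) fun h => (hcolIn j h).ge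
  obtain ⟨r, hrq, hr⟩ :=
    exists_ne_isNash_of_rowPay_eq_zero hp hq hrowIn hrowOut hcol hd hdsum hdsupp hdker
  exact hrq (huniq p r hr).2

/-- If `(p,q)` is the unique SIISOW Nash equilibrium of `R` with `|supp q| ≥ 2`, then
there is no nonzero `δ` supported on `J` with `1ᵀδ = 0` and `R_IJ δ = 0`. -/
theorem stmt10 {m n : ℕ} (R : Matrix (Fin m) (Fin n) ℝ)
    (p : Fin m → ℝ) (q : Fin n → ℝ) (v : ℝ)
    (hNE : isNash R p q) (hv : v = pay R p q)
    (huniq : ∀ p' q', isNash R p' q' → p' = p ∧ q' = q)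
    (hJ : 2 ≤ Fintype.card {j : Fin n // 0 < q j})
    (hrowIn : ∀ i, 0 < p i → rowPay R i q = v)
    (hcolIn : ∀ j, 0 < q j → colPay R p j = v)
    (hrowOut : ∀ i, p i = 0 → rowPay R i q < v)
    (hcolOut : ∀ j, q j = 0 → v < colPay R p j) :
    ¬ ∃ δ : {j : Fin n // 0 < q j} → ℝ, δ ≠ 0 ∧
        (∑ j : {j : Fin n // 0 < q j}, δ j = 0) ∧
        ∀ i : {i : Fin m // 0 < p i}, ∑ j : {j : Fin n // 0 < q j}, R i.1 j.1 * δ j = 0 :=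
  stmt10_general R p q v hNE huniq hrowIn hcolIn hrowOut hcolOut
end

section
/- Suppose the (|I|+1)×(|I|+1) matrix [[Q_{IJ}, −1]; [1ᵀ, 0]] is invertible and Q'_{IJ} = α Q_{IJ} + β·J_{IJ} where α ≠ 0, β ∈ ℝ, and J_{IJ} is the all-ones matrix. Then [[Q'_{IJ}, −1]; [1ᵀ, 0]] is also invertible. -/
open Finset

/-- The bordered matrix `[[Q_IJ, -1]; [1ᵀ, 0]]`. -/
noncomputable def blockOf {κ : Type*} (M : Matrix κ κ ℝ) :
    Matrix (κ ⊕ Unit) (κ ⊕ Unit) ℝ :=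
  Matrix.of fun a b =>
    match a, b with
    | Sum.inl i, Sum.inl j => M i j
    | Sum.inl _, Sum.inr _ => -1
    | Sum.inr _, Sum.inl _ => 1
    | Sum.inr _, Sum.inr _ => 0

/-!
Right-multiplying the bordered matrix by the unipotent matrix `[[1, 0]; [-β 1ᵀ, 1]]` adds `β` to
every entry of `Q`, because the border column `-1` absorbs the shift; scaling the first block row
by `α` and the last column by `α⁻¹` turns `Q` into `α Q` and leaves the border unchanged. So the
determinant for `α Q + β J` is `α ^ (|I| - 1)` times the one for `Q`.
-/

open Matrix

section Bordered

variable {κ : Type*}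

theorem blockOf_eq_fromBlocks (M : Matrix κ κ ℝ) :
    blockOf M = fromBlocks M (of fun _ _ => -1) (of fun _ _ => 1) 0 := by
  ext (i | i) (j | j) <;> rfl

variable [Fintype κ] [DecidableEq κ]

theorem blockOf_add_const (M : Matrix κ κ ℝ) (β : ℝ) :
    blockOf (M + β • of fun _ _ => 1) =
      blockOf M * fromBlocks 1 0 (of fun _ _ => -β) 1 := by
  simp only [blockOf_eq_fromBlocks, fromBlocks_multiply]
  congr 1 <;> ext <;> simp [Matrix.mul_apply]

theorem blockOf_smul {α : ℝ} (hα : α ≠ 0) (M : Matrix κ κ ℝ) :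
    blockOf (α • M) = fromBlocks (α • 1) 0 0 1 * blockOf M * fromBlocks 1 0 0 (α⁻¹ • 1) := by
  simp only [blockOf_eq_fromBlocks, fromBlocks_multiply]
  congr 1 <;> ext <;> simp [hα]

theorem det_blockOf_add_const (M : Matrix κ κ ℝ) (β : ℝ) :
    (blockOf (M + β • of fun _ _ => 1)).det = (blockOf M).det := by
  rw [blockOf_add_const, det_mul, det_fromBlocks_zero₁₂, det_one, det_one, mul_one, mul_one]

theorem det_blockOf_smul {α : ℝ} (hα : α ≠ 0) (M : Matrix κ κ ℝ) :
    (blockOf (α • M)).det = α ^ Fintype.card κ * α⁻¹ * (blockOf M).det := by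
  rw [blockOf_smul hα, det_mul, det_mul, det_fromBlocks_zero₁₂, det_fromBlocks_zero₁₂, det_smul,
    det_smul, det_one, det_one, Fintype.card_unit]
  ring

end Bordered

/-- Invertibility of the bordered matrix is preserved under `Q ↦ α Q + β J` with
`α ≠ 0`, where `J` is the all-ones matrix. -/
theorem stmt15 {κ : Type*} [Fintype κ] [DecidableEq κ]
    (Q Q' : Matrix κ κ ℝ) (α β : ℝ) (hα : α ≠ 0)
    (hQ' : Q' = α • Q + β • (Matrix.of fun _ _ => (1 : ℝ)))
    (hinv : IsUnit (blockOf Q).det) :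
    IsUnit (blockOf Q').det := by
  rw [hQ', det_blockOf_add_const, det_blockOf_smul hα, isUnit_iff_ne_zero]
  rw [isUnit_iff_ne_zero] at hinv
  exact mul_ne_zero (mul_ne_zero (pow_ne_zero _ hα) (inv_ne_zero hα)) hinv
end
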